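/- arXiv:1003.6020 — 2 statements merged into one kernel-verified Lean document; each statement's English description precedes it below -/
import Mathlib

section
/- For all x > 0, the inequality (x + 1/2)·log x − x + (1/2)·log(2π) + 1/(12x) − 1/(360x³) < log Γ(x+1) < (x + 1/2)·log x − x + (1/2)·log(2π) + 1/(12x) holds. -/
/-!
Write `R y = log Γ(y+1) - ((y + 1/2) log y - y + (1/2) log (2π))`. The functional equation of `Γ`
gives `R y - R (y+1) = (y + 1/2) log (1 + 1/y) - 1`, and the series of `log ((1+s)/(1-s))` with
`s = 1/(2y+1)` turns this into `∑_{k ≥ 1} s^(2k)/(2k+1)`. Comparing with the geometric series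
`∑ s^(2k)/3` bounds it above by `1/(12y) - 1/(12(y+1))`; truncating after three terms bounds it
below by `g y - g (y+1)` with `g y = 1/(12y) - 1/(360y³)`. Euler's limit formula for `Γ` and
Stirling's formula for `n!` give `R (x + n) → 0`, so telescoping along `x, x+1, x+2, …` yields
`g x < R x < 1/(12x)`.
-/

open Real Filter Topology

theorem StrictAnti.lt_of_tendsto {α : Type*} [TopologicalSpace α] [Preorder α]
    [OrderClosedTopology α] {u : ℕ → α} {a : α} (hu : StrictAnti u)
    (hlim : Tendsto u atTop (𝓝 a)) : a < u 0 :=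
  (hu.antitone.le_of_tendsto hlim 1).trans_lt (hu zero_lt_one)

theorem lt_of_sub_add_one_lt_of_tendsto {φ ψ : ℝ → ℝ} {x a : ℝ} (hx : 0 < x)
    (hstep : ∀ y, 0 < y → φ y - φ (y + 1) < ψ y - ψ (y + 1))
    (hφ : Tendsto (fun n : ℕ => φ (x + n)) atTop (𝓝 a))
    (hψ : Tendsto (fun n : ℕ => ψ (x + n)) atTop (𝓝 a)) : φ x < ψ x := by
  have hu : StrictAnti fun n : ℕ => ψ (x + n) - φ (x + n) := by
    refine strictAnti_nat_of_succ_lt fun n => ?_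
    have := hstep (x + n) (by positivity)
    push_cast
    rw [← add_assoc]
    linarith
  have h := hu.lt_of_tendsto (by simpa using hψ.sub hφ)
  simp only [CharP.cast_eq_zero, add_zero] at h
  linarith

theorem Filter.Tendsto.one_div_const_mul_pow {α : Type*} {l : Filter α} {f : α → ℝ}
    (hf : Tendsto f l atTop) {c : ℝ} (hc : 0 < c) {k : ℕ} (hk : k ≠ 0) :
    Tendsto (fun a => 1 / (c * f a ^ k)) l (𝓝 0) :=
  tendsto_const_nhds.div_atTop (((tendsto_pow_atTop hk).comp hf).const_mul_atTop hc)

theorem tendsto_add_mul_log_one_add_div_atTop (x c : ℝ) :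
    Tendsto (fun t => (t + c) * log (1 + x / t)) atTop (𝓝 x) := by
  have hlog : Tendsto (fun t => log (1 + x / t)) atTop (𝓝 0) := by
    have h : Tendsto (fun t => 1 + x / t) atTop (𝓝 1) := by
      simpa using ((tendsto_const_nhds (x := x)).div_atTop tendsto_id).const_add 1
    simpa using h.log one_ne_zero
  simpa [add_mul] using (tendsto_mul_log_one_add_div_atTop x).add (hlog.const_mul c)

theorem hasSum_mul_log_one_add_inv_sub_one {y : ℝ} (hy : 0 < y) :
    HasSum (fun k : ℕ => (1 / (2 * y + 1)) ^ (2 * k + 2) / (2 * k + 3))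
      ((y + 1 / 2) * log (1 + y⁻¹) - 1) := by
  let f (k : ℕ) : ℝ := (1 / (2 * y + 1)) ^ (2 * k) / (2 * k + 1)
  have hf : HasSum f ((y + 1 / 2) * log (1 + y⁻¹)) := by
    convert! (hasSum_log_one_add_inv hy).mul_left (y + 1 / 2) using 1
    funext k
    simp only [f, pow_succ]
    field
  convert! (hasSum_nat_add_iff' 1).mpr hf using 1
  · funext k
    simp only [f]
    push_cast
    ring_nf
  · simp [f]

theorem mul_log_one_add_inv_sub_one_lt {y : ℝ} (hy : 0 < y) :
    (y + 1 / 2) * log (1 + y⁻¹) - 1 < 1 / (12 * y) - 1 / (12 * (y + 1)) := by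
  set r : ℝ := (1 / (2 * y + 1)) ^ 2 with hr
  have hr0 : 0 < r := by positivity
  have hr1 : r < 1 := by
    rw [hr, div_pow, one_pow, div_lt_one (by positivity)]
    nlinarith
  have hgeom : HasSum (fun k : ℕ => r ^ (k + 1) / 3) (1 / (12 * y) - 1 / (12 * (y + 1))) := by
    convert! ((hasSum_geometric_of_lt_one hr0.le hr1).mul_left r).div_const 3 using 1
    · funext k; ring
    · have h1r : 1 - r = 4 * y * (y + 1) / (2 * y + 1) ^ 2 := by rw [hr]; field_simp; ring
      rw [h1r, hr]
      field_simp
      ring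
  refine hasSum_lt (i := 1) (fun k => ?_) ?_ (hasSum_mul_log_one_add_inv_sub_one hy) hgeom
  · have : (3 : ℝ) ≤ 2 * k + 3 := by linarith [k.cast_nonneg (α := ℝ)]
    rw [hr, ← pow_mul, mul_add, mul_one]
    gcongr
  · rw [hr, ← pow_mul]
    norm_num
    gcongr
    norm_num

theorem lt_mul_log_one_add_inv_sub_one {y : ℝ} (hy : 0 < y) :
    1 / (12 * y) - 1 / (360 * y ^ 3) - (1 / (12 * (y + 1)) - 1 / (360 * (y + 1) ^ 3)) <
      (y + 1 / 2) * log (1 + y⁻¹) - 1 := by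
  have hsum := hasSum_mul_log_one_add_inv_sub_one hy
  calc _ < ∑ k ∈ Finset.range 3, (1 / (2 * y + 1)) ^ (2 * k + 2) / (2 * k + 3) := by
        simp only [Finset.sum_range_succ, Finset.sum_range_zero]
        norm_num
        rw [← sub_pos]
        field_simp
        -- cleared of denominators, the difference is a polynomial in `y` with positive coefficients
        ring_nf
        positivity
    _ ≤ _ := sum_le_hasSum _ (fun k _ => by positivity) hsum

noncomputable def stirlingRemainder (y : ℝ) : ℝ :=
  log (Gamma (y + 1)) - ((y + 1 / 2) * log y - y + 1 / 2 * log (2 * π))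

theorem stirlingRemainder_sub_stirlingRemainder_add_one {y : ℝ} (hy : 0 < y) :
    stirlingRemainder y - stirlingRemainder (y + 1) = (y + 1 / 2) * log (1 + y⁻¹) - 1 := by
  have hGamma : log (Gamma (y + 1 + 1)) = log (y + 1) + log (Gamma (y + 1)) := by
    rw [Gamma_add_one (by positivity),
      log_mul (by positivity) (Gamma_pos_of_pos (by positivity)).ne']
  have hlog : log (1 + y⁻¹) = log (y + 1) - log y := by
    rw [← log_div (by positivity) hy.ne']
    congr 1
    field
  rw [stirlingRemainder, stirlingRemainder, hGamma, hlog]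
  ring

theorem stirlingRemainder_natCast {n : ℕ} (hn : n ≠ 0) :
    stirlingRemainder n = log (Stirling.stirlingSeq n) - log π / 2 := by
  have hn0 : (0 : ℝ) < n := by positivity
  rw [stirlingRemainder, Gamma_nat_eq_factorial, Stirling.log_stirlingSeq_formula,
    log_mul two_ne_zero pi_ne_zero, log_mul two_ne_zero hn0.ne', log_div hn0.ne' (exp_pos 1).ne',
    log_exp]
  ring

theorem tendsto_stirlingRemainder_natCast :
    Tendsto (fun n : ℕ => stirlingRemainder n) atTop (𝓝 0) := by
  have h := (Stirling.tendsto_stirlingSeq_sqrt_pi.log (sqrt_pos.mpr pi_pos).ne').sub_const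
    (log π / 2)
  rw [log_sqrt pi_pos.le, sub_self] at h
  exact h.congr' <| (eventually_ne_atTop 0).mono fun n hn => (stirlingRemainder_natCast hn).symm

theorem stirlingRemainder_add_natCast {x : ℝ} (hx : 0 < x) {n : ℕ} (hn : n ≠ 0) :
    stirlingRemainder (x + n) = stirlingRemainder n +
      (log (Gamma x) - BohrMollerup.logGammaSeq x n) + (x - (x + n + 1 / 2) * log (1 + x / n)) := by
  have hn0 : (0 : ℝ) < n := by positivity
  have hGamma : log (Gamma (x + n + 1)) =
      log (Gamma x) + ∑ m ∈ Finset.range (n + 1), log (x + m) := by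
    have := BohrMollerup.f_add_nat_eq (f := log ∘ Gamma) (fun {y} hy => by
      simp only [Function.comp_apply]
      rw [Gamma_add_one hy.ne', log_mul hy.ne' (Gamma_pos_of_pos hy).ne', add_comm]) hx (n + 1)
    simpa [add_assoc] using this
  have hlog : log (1 + x / n) = log (x + n) - log n := by
    rw [← log_div (by positivity) hn0.ne']
    congr 1
    field
  rw [stirlingRemainder, stirlingRemainder, hGamma, Gamma_nat_eq_factorial, hlog,
    BohrMollerup.logGammaSeq]
  ring

theorem tendsto_stirlingRemainder_add_natCast {x : ℝ} (hx : 0 < x) :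
    Tendsto (fun n : ℕ => stirlingRemainder (x + n)) atTop (𝓝 0) := by
  have hGamma : Tendsto (fun n => log (Gamma x) - BohrMollerup.logGammaSeq x n) atTop (𝓝 0) := by
    simpa using (BohrMollerup.tendsto_log_gamma hx).const_sub (log (Gamma x))
  have hlog : Tendsto (fun n : ℕ => x - (x + n + 1 / 2) * log (1 + x / n)) atTop (𝓝 0) := by
    have := (tendsto_add_mul_log_one_add_div_atTop x (x + 1 / 2)).comp tendsto_natCast_atTop_atTop
    simpa using (this.const_sub x).congr fun n => by simp only [Function.comp_apply]; ring
  have h := (tendsto_stirlingRemainder_natCast.add hGamma).add hlog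
  rw [add_zero, add_zero] at h
  exact h.congr' <| (eventually_ne_atTop 0).mono fun n hn =>
    (stirlingRemainder_add_natCast hx hn).symm

theorem stirling_enveloping_bounds (x : ℝ) (hx : 0 < x) :
    (x + 1/2) * Real.log x - x + (1/2) * Real.log (2 * π) + 1 / (12 * x) - 1 / (360 * x ^ 3)
      < Real.log (Real.Gamma (x + 1)) ∧
    Real.log (Real.Gamma (x + 1)) <
      (x + 1/2) * Real.log x - x + (1/2) * Real.log (2 * π) + 1 / (12 * x) := by
  have hxn : Tendsto (fun n : ℕ => x + n) atTop atTop :=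
    tendsto_atTop_add_const_left _ x tendsto_natCast_atTop_atTop
  have hR := tendsto_stirlingRemainder_add_natCast hx
  have h12 := hxn.one_div_const_mul_pow (c := 12) (by norm_num) one_ne_zero
  have h360 := hxn.one_div_const_mul_pow (c := 360) (by norm_num) three_ne_zero
  constructor
  · have h := lt_of_sub_add_one_lt_of_tendsto (ψ := stirlingRemainder)
      (φ := fun y => 1 / (12 * y) - 1 / (360 * y ^ 3)) hx
      (fun y hy => stirlingRemainder_sub_stirlingRemainder_add_one hy ▸
        lt_mul_log_one_add_inv_sub_one hy)
      (by simpa using h12.sub h360) hR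
    rw [stirlingRemainder] at h
    linarith
  · have h := lt_of_sub_add_one_lt_of_tendsto (φ := stirlingRemainder)
      (ψ := fun y => 1 / (12 * y)) hx
      (fun y hy => stirlingRemainder_sub_stirlingRemainder_add_one hy ▸
        mul_log_one_add_inv_sub_one_lt hy)
      hR (by simpa using h12)
    rw [stirlingRemainder] at h
    linarith
end

section
/- There exist constants C > 0 and X such that for all x ≥ X, |Γ(x+1)/(x^x e^{-x} √(2π(x+1/6))) − (1 + (1/144)/(x + 23/90)²)| ≤ C/x⁴. -/
/-!
The ratio equals `exp (μ x - log (1 + 1/(6x)) / 2)`, where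
`μ x = log Γ(x) - (x - 1/2) log x + x - log (2π) / 2` is Binet's function.
Since `μ x - μ (x + 1) = (x + 1/2) log (1 + 1/x) - 1` and `μ (x + n) → 0` (Stirling's formula
on the integers, carried over to all `x` by the log-convexity of `Γ`), `μ x` is the sum of its
increments. They agree with those of `1/(12x) - 1/(360x³)` up to `O(x⁻⁶)`, so
`μ x = 1/(12x) - 1/(360x³) + O(x⁻⁵)`. Expanding the logarithm and the exponential, the ratio is
`1 + 1/(144x²) - 23/(6480x³) + O(x⁻⁴)`, and `(1/144)/(x + 23/90)²` agrees with the middle terms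
to that order.
-/

open Real Filter Topology Finset

noncomputable def binet (x : ℝ) : ℝ :=
  log (Gamma x) - (x - 1/2) * log x + x - log (2 * π) / 2

lemma log_Gamma_add_one {y : ℝ} (hy : 0 < y) : log (Gamma (y + 1)) = log (Gamma y) + log y := by
  rw [Gamma_add_one hy.ne', log_mul hy.ne' (Gamma_pos_of_pos hy).ne', add_comm]

lemma log_add_sub_log {y s : ℝ} (hy : 0 < y) (hs : 0 ≤ s) :
    log (y + s) - log y = log (1 + s / y) := by
  rw [← log_div (by positivity) hy.ne', add_div, div_self hy.ne']

lemma binet_sub_binet_add_one {x : ℝ} (hx : 0 < x) :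
    binet x - binet (x + 1) = (x + 1/2) * log (1 + 1/x) - 1 := by
  have := log_add_sub_log hx zero_le_one
  unfold binet
  rw [log_Gamma_add_one hx, ← this]
  ring

lemma tendsto_add_mul_log_one_add_div (a t : ℝ) :
    Tendsto (fun x ↦ (x + a) * log (1 + t / x)) atTop (𝓝 t) := by
  have hlog : Tendsto (fun x ↦ log (1 + t / x)) atTop (𝓝 0) := by
    have h1 : Tendsto (fun x ↦ 1 + t / x) atTop (𝓝 1) := by
      simpa using tendsto_const_nhds.add (tendsto_const_nhds.div_atTop (tendsto_id (α := ℝ)))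
    simpa [Function.comp_def] using (continuousAt_log one_ne_zero).tendsto.comp h1
  simpa [add_mul] using (tendsto_mul_log_one_add_div_atTop t).add (hlog.const_mul a)

lemma tendsto_binet_nat : Tendsto (fun n : ℕ ↦ binet n) atTop (𝓝 0) := by
  rw [← tendsto_add_atTop_iff_nat 1]
  have hstirling : Tendsto (fun n : ℕ ↦ log (Stirling.stirlingSeq n)) atTop (𝓝 (log π / 2)) := by
    rw [← log_sqrt pi_pos.le]
    exact ((continuousAt_log (by positivity)).tendsto).comp Stirling.tendsto_stirlingSeq_sqrt_pi
  have hlog := (tendsto_add_mul_log_one_add_div (1/2) 1).comp tendsto_natCast_atTop_atTop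
  have hsum := (hstirling.sub (hlog.sub_const 1)).sub_const (log π / 2)
  rw [show log π / 2 - (1 - 1) - log π / 2 = 0 by ring] at hsum
  refine hsum.congr' ?_
  filter_upwards [eventually_ge_atTop 1] with n hn
  have hn0 : (0 : ℝ) < n := by exact_mod_cast hn
  have := log_add_sub_log hn0 zero_le_one
  simp only [Function.comp_apply, Stirling.log_stirlingSeq_formula, Nat.cast_add_one, binet,
    Gamma_nat_eq_factorial]
  rw [log_mul two_ne_zero hn0.ne', log_mul two_ne_zero pi_ne_zero,
    log_div hn0.ne' (exp_ne_zero 1), log_exp, ← this]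
  ring

lemma tendsto_binet_nat_add_sub_binet_nat {s : ℝ} (hs0 : 0 < s) (hs1 : s ≤ 1) :
    Tendsto (fun n : ℕ ↦ binet (n + s) - binet n) atTop (𝓝 0) := by
  have hfeq : ∀ {y : ℝ}, 0 < y → (log ∘ Gamma) (y + 1) = (log ∘ Gamma) y + log y :=
    log_Gamma_add_one
  have hgap : Tendsto (fun n : ℕ ↦ log (Gamma (n + s)) - log (Gamma n) - s * log n)
      atTop (𝓝 0) := by
    have hlow : Tendsto (fun n : ℕ ↦ s * (log ((n : ℝ) - 1) - log n)) atTop (𝓝 0) := by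
      rw [← tendsto_add_atTop_iff_nat 1]
      simpa using tendsto_log_nat_add_one_sub_log.neg.const_mul s
    -- log-convexity: `s log (n - 1) ≤ log Γ(n + s) - log Γ(n) ≤ s log n`
    refine tendsto_of_tendsto_of_tendsto_of_le_of_le' hlow tendsto_const_nhds ?_ ?_
    · filter_upwards [eventually_ge_atTop 2] with n hn
      have := BohrMollerup.f_add_nat_ge convexOn_log_Gamma hfeq hn hs0
      simp only [Function.comp_apply] at this
      linarith
    · filter_upwards [eventually_ne_atTop 0] with n hn
      have := BohrMollerup.f_add_nat_le convexOn_log_Gamma hfeq hn hs0 hs1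
      simp only [Function.comp_apply] at this
      linarith
  have hlog := (tendsto_add_mul_log_one_add_div (s - 1/2) s).comp tendsto_natCast_atTop_atTop
  have hsum := (hgap.add_const s).sub hlog
  rw [zero_add, sub_self] at hsum
  refine hsum.congr' ?_
  filter_upwards [eventually_ne_atTop 0] with n hn
  have hn0 : (0 : ℝ) < n := by exact_mod_cast Nat.pos_of_ne_zero hn
  simp only [Function.comp_apply, binet, ← log_add_sub_log hn0 hs0.le]
  ring

lemma tendsto_binet_add_nat {x : ℝ} (hx : 0 < x) :
    Tendsto (fun n : ℕ ↦ binet (x + n)) atTop (𝓝 0) := by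
  obtain ⟨k, s, hs0, hs1, rfl⟩ : ∃ (k : ℕ) (s : ℝ), 0 < s ∧ s ≤ 1 ∧ s + k = x := by
    have hceil : 1 ≤ ⌈x⌉₊ := Nat.one_le_iff_ne_zero.mpr (Nat.ceil_pos.mpr hx).ne'
    refine ⟨⌈x⌉₊ - 1, x - (⌈x⌉₊ - 1 : ℕ), ?_, ?_, by ring⟩ <;>
      push_cast [hceil] <;> linarith [Nat.le_ceil x, Nat.ceil_lt_add_one hx.le]
  have := ((tendsto_binet_nat_add_sub_binet_nat hs0 hs1).add tendsto_binet_nat).comp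
    (tendsto_add_atTop_nat k)
  rw [zero_add] at this
  refine this.congr fun n ↦ ?_
  simp only [Function.comp_apply, sub_add_cancel, Nat.cast_add]
  ring_nf

lemma abs_le_of_tendsto_zero_of_abs_sub_succ_le {a c : ℕ → ℝ} (ha : Tendsto a atTop (𝓝 0))
    (hc : ∀ n, 0 ≤ c n) (h : ∀ n, |a n - a (n + 1)| ≤ c n - c (n + 1)) : |a 0| ≤ c 0 := by
  have hpartial : ∀ n, |a 0 - a n| ≤ c 0 := fun n ↦ calc
    |a 0 - a n| = |∑ k ∈ range n, (a k - a (k + 1))| := by rw [sum_range_sub']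
    _ ≤ ∑ k ∈ range n, (c k - c (k + 1)) :=
      (abs_sum_le_sum_abs _ _).trans (sum_le_sum fun k _ ↦ h k)
    _ = c 0 - c n := sum_range_sub' c n
    _ ≤ c 0 := sub_le_self _ (hc n)
  have hlim : Tendsto (fun n ↦ |a 0 - a n|) atTop (𝓝 |a 0|) := by
    simpa using (tendsto_const_nhds.sub ha).abs
  exact le_of_tendsto' hlim hpartial

lemma abs_log_one_add_add_sum_le {t : ℝ} (n : ℕ) (ht0 : 0 ≤ t) (ht1 : t ≤ 1/2) :
    |log (1 + t) + ∑ i ∈ range n, (-t) ^ (i + 1) / (i + 1)| ≤ 2 * t ^ (n + 1) := by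
  have h := abs_log_sub_add_sum_range_le (x := -t)
    (by rw [abs_neg, abs_of_nonneg ht0]; linarith) n
  rw [abs_neg, abs_of_nonneg ht0, sub_neg_eq_add, add_comm] at h
  refine h.trans ?_
  rw [div_le_iff₀ (by linarith)]
  nlinarith [pow_nonneg ht0 (n + 1)]

noncomputable def binetApprox (x : ℝ) : ℝ := 1 / (12 * x) - 1 / (360 * x ^ 3)

lemma tendsto_binetApprox_atTop : Tendsto binetApprox atTop (𝓝 0) := by
  have h1 := tendsto_const_nhds (x := (1 : ℝ)).div_atTop
    (tendsto_id.const_mul_atTop (by norm_num : (0 : ℝ) < 12))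
  have h3 := tendsto_const_nhds (x := (1 : ℝ)).div_atTop
    ((tendsto_pow_atTop (by norm_num : 3 ≠ 0)).const_mul_atTop (by norm_num : (0 : ℝ) < 360))
  have := h1.sub h3
  rwa [sub_zero] at this

lemma abs_binet_step_sub_le {y : ℝ} (hy : 2 ≤ y) :
    |(y + 1/2) * log (1 + 1/y) - 1 - (binetApprox y - binetApprox (y + 1))| ≤ 4 / y ^ 6 := by
  have hy0 : 0 < y := by linarith
  set S := ∑ i ∈ range 6, (-(1 / y)) ^ (i + 1) / (i + 1)
  have htaylor : |log (1 + 1/y) + S| ≤ 2 * (1 / y) ^ 7 :=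
    abs_log_one_add_add_sum_le 6 (by positivity) (by rw [div_le_div_iff₀ hy0 two_pos]; linarith)
  have hsplit : (y + 1/2) * log (1 + 1/y) - 1 - (binetApprox y - binetApprox (y + 1)) =
      (y + 1/2) * (log (1 + 1/y) + S)
        - (50 * y^3 + 135 * y^2 + 114 * y + 30) / (360 * y^6 * (y + 1)^3) := by
    simp only [S, binetApprox, sum_range_succ, sum_range_zero]
    generalize log (1 + 1/y) = ℓ
    push_cast
    field_simp
    ring
  have hmain : |(y + 1/2) * (log (1 + 1/y) + S)| ≤ 3 / y^6 := by
    rw [abs_mul, abs_of_pos (by linarith)]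
    calc (y + 1/2) * |log (1 + 1/y) + S| ≤ (y + 1/2) * (2 * (1 / y) ^ 7) := by gcongr
      _ = (2 * y + 1) / y ^ 7 := by field_simp
      _ ≤ 3 * y / y ^ 7 := by gcongr; linarith
      _ = 3 / y ^ 6 := by field_simp
  have hrem : (50 * y^3 + 135 * y^2 + 114 * y + 30) / (360 * y^6 * (y + 1)^3) ≤ 1 / y^6 := by
    rw [div_le_div_iff₀ (by positivity) (by positivity)]
    nlinarith [pow_pos hy0 6, pow_pos hy0 9, pow_pos hy0 8, pow_pos hy0 7]
  rw [hsplit]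
  calc _ ≤ |(y + 1/2) * (log (1 + 1/y) + S)|
        + |(50 * y^3 + 135 * y^2 + 114 * y + 30) / (360 * y^6 * (y + 1)^3)| := abs_sub _ _
    _ ≤ 3 / y^6 + 1 / y^6 := add_le_add hmain (by rwa [abs_of_nonneg (by positivity)])
    _ = 4 / y^6 := by ring

/-- Hermite–Hadamard for `t⁻⁶` on `[y - 1/2, y + 1/2]`. -/
lemma inv_pow_six_le_sub_inv_pow_five {y : ℝ} (hy : 1/2 < y) :
    1 / y ^ 6 ≤ (1 / (y - 1/2) ^ 5 - 1 / (y + 1/2) ^ 5) / 5 := by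
  have h1 : 0 < y - 1/2 := by linarith
  have hy0 : 0 < y := by linarith
  rw [div_sub_div _ _ (by positivity) (by positivity), div_div,
    div_le_div_iff₀ (by positivity) (by positivity)]
  have e1 : 1 * (y + 1/2) ^ 5 - (y - 1/2) ^ 5 * 1 = 5 * y^4 + 5/2 * y^2 + 1/16 := by ring
  have e2 : (y - 1/2) ^ 5 * (y + 1/2) ^ 5 * 5 = 5 * (y ^ 2 - 1/4) ^ 5 := by ring
  rw [e1, e2]
  set u := y ^ 2 with hu_def
  have hu : 1/4 < u := by nlinarith
  have : y ^ 6 = u ^ 3 := by rw [hu_def]; ring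
  rw [this, show y ^ 4 = u ^ 2 by rw [hu_def]; ring]
  nlinarith [pow_pos (by linarith : 0 < u - 1/4) 2, pow_pos (by linarith : 0 < u - 1/4) 3,
    pow_pos (by linarith : 0 < u - 1/4) 4, pow_pos (by linarith : 0 < u - 1/4) 5]

lemma abs_binet_sub_binetApprox_le {x : ℝ} (hx : 2 ≤ x) :
    |binet x - binetApprox x| ≤ 4 / x ^ 5 := by
  have hx0 : 0 < x := by linarith
  have hlim : Tendsto (fun k : ℕ ↦ binet (x + k) - binetApprox (x + k)) atTop (𝓝 0) := by
    simpa using (tendsto_binet_add_nat hx0).sub (tendsto_binetApprox_atTop.comp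
      (tendsto_atTop_add_const_left _ x tendsto_natCast_atTop_atTop))
  have hstep : ∀ k : ℕ, |binet (x + k) - binetApprox (x + k)
      - (binet (x + ↑(k + 1)) - binetApprox (x + ↑(k + 1)))|
        ≤ 4 / 5 / (x + k - 1/2) ^ 5 - 4 / 5 / (x + ↑(k + 1) - 1/2) ^ 5 := by
    intro k
    have hk : 2 ≤ x + k := le_add_of_le_of_nonneg hx k.cast_nonneg
    push_cast
    calc _ = |(x + k + 1/2) * log (1 + 1 / (x + k)) - 1
            - (binetApprox (x + k) - binetApprox (x + k + 1))| := by
          rw [← binet_sub_binet_add_one (by linarith), add_assoc]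
          ring_nf
      _ ≤ 4 / (x + k) ^ 6 := abs_binet_step_sub_le hk
      _ ≤ 4 * ((1 / (x + k - 1/2) ^ 5 - 1 / (x + k + 1/2) ^ 5) / 5) := by
          have := inv_pow_six_le_sub_inv_pow_five (y := x + k) (by linarith)
          rw [div_eq_mul_one_div 4]
          gcongr
      _ = _ := by ring_nf
  have h := abs_le_of_tendsto_zero_of_abs_sub_succ_le hlim (fun k ↦ by
    have : 0 < x + k - 1/2 := by linarith [k.cast_nonneg (α := ℝ)]
    positivity) hstep
  simp only [Nat.cast_zero, add_zero] at h
  refine h.trans ?_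
  have hx' : 0 < x - 1/2 := by linarith
  rw [div_div, div_le_div_iff₀ (by positivity) (by positivity)]
  nlinarith [pow_le_pow_left₀ (by linarith : (0:ℝ) ≤ 3/4 * x) (by linarith : 3/4 * x ≤ x - 1/2) 5,
    pow_pos hx0 5]

noncomputable def logStirlingRatio (x : ℝ) : ℝ := binet x - log (1 + 1 / (6 * x)) / 2

lemma exp_logStirlingRatio {x : ℝ} (hx : 0 < x) :
    exp (logStirlingRatio x) = Gamma (x + 1) / (x ^ x * exp (-x) * √(2 * π * (x + 1/6))) := by
  have hfactor : 2 * π * (x + 1/6) = 2 * π * x * (1 + 1 / (6 * x)) := by field_simp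
  have hden : 0 < x ^ x * exp (-x) * √(2 * π * (x + 1/6)) := by positivity
  rw [← exp_log (div_pos (Gamma_pos_of_pos (by linarith)) hden), log_div (Gamma_pos_of_pos
    (by linarith)).ne' hden.ne', log_Gamma_add_one hx, log_mul (by positivity) (by positivity),
    log_mul (by positivity) (by positivity), log_rpow hx, log_exp, log_sqrt (by positivity),
    hfactor, log_mul (by positivity) (by positivity), log_mul (by positivity) hx.ne',
    logStirlingRatio, binet]
  congr 1
  ring

lemma abs_logStirlingRatio_sub_le {x : ℝ} (hx : 2 ≤ x) :
    |logStirlingRatio x - (1 / (144 * x ^ 2) - 23 / (6480 * x ^ 3))| ≤ 3 / x ^ 4 := by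
  have hx0 : 0 < x := by linarith
  have htaylor : |log (1 + 1 / (6 * x)) + ∑ i ∈ range 3, (-(1 / (6 * x))) ^ (i + 1) / (i + 1)|
      ≤ 2 * (1 / (6 * x)) ^ 4 :=
    abs_log_one_add_add_sum_le 3 (by positivity)
      (by rw [div_le_div_iff₀ (by positivity) two_pos]; linarith)
  have hsplit : logStirlingRatio x - (1 / (144 * x ^ 2) - 23 / (6480 * x ^ 3)) =
      (binet x - binetApprox x)
        - (log (1 + 1 / (6 * x)) + ∑ i ∈ range 3, (-(1 / (6 * x))) ^ (i + 1) / (i + 1)) / 2 := by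
    simp only [logStirlingRatio, binetApprox, sum_range_succ, sum_range_zero]
    generalize log (1 + 1 / (6 * x)) = ℓ
    push_cast
    field_simp
    ring
  have h5 : 4 / x ^ 5 ≤ 2 / x ^ 4 := by
    rw [div_le_div_iff₀ (by positivity) (by positivity)]
    nlinarith [pow_pos hx0 4]
  have h4 : 2 * (1 / (6 * x)) ^ 4 / 2 ≤ 1 / x ^ 4 := by
    rw [mul_div_cancel_left₀ _ two_ne_zero, div_pow, one_pow, mul_pow]
    gcongr
    nlinarith
  rw [hsplit]
  calc _ ≤ |binet x - binetApprox x|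
        + |(log (1 + 1 / (6 * x)) + ∑ i ∈ range 3, (-(1 / (6 * x))) ^ (i + 1) / (i + 1)) / 2| :=
        abs_sub _ _
    _ ≤ 2 / x ^ 4 + 1 / x ^ 4 := by
        refine add_le_add ((abs_binet_sub_binetApprox_le hx).trans h5) ?_
        rw [abs_div, abs_two]
        exact (div_le_div_of_nonneg_right htaylor two_pos.le).trans h4
    _ = 3 / x ^ 4 := by ring

lemma abs_sub_inv_sq_shift_le {x : ℝ} (hx : 0 < x) :
    |1 / (144 * x ^ 2) - 23 / (6480 * x ^ 3) - 1 / 144 / (x + 23/90) ^ 2| ≤ 1 / x ^ 4 := by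
  have hid : 1 / (144 * x ^ 2) - 23 / (6480 * x ^ 3) - 1 / 144 / (x + 23/90) ^ 2
      = -((529/60 * x + 12167/8100) / (6480 * x ^ 3 * (x + 23/90) ^ 2)) := by
    field_simp
    ring
  rw [hid, abs_neg, abs_of_nonneg (by positivity), div_le_div_iff₀ (by positivity) (by positivity)]
  nlinarith [pow_pos hx 3, pow_pos hx 4, pow_pos hx 5]

lemma abs_logStirlingRatio_le {x : ℝ} (hx : 2 ≤ x) : |logStirlingRatio x| ≤ 1 / x ^ 2 := by
  have hx0 : 0 < x := by linarith
  have hP : |1 / (144 * x ^ 2) - 23 / (6480 * x ^ 3)| ≤ 1 / (144 * x ^ 2) := by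
    have hpos : 23 / (6480 * x ^ 3) ≤ 1 / (144 * x ^ 2) := by
      rw [div_le_div_iff₀ (by positivity) (by positivity)]
      nlinarith [pow_pos hx0 2]
    rw [abs_of_nonneg (sub_nonneg.mpr hpos)]
    exact sub_le_self _ (by positivity)
  calc |logStirlingRatio x| ≤ |1 / (144 * x ^ 2) - 23 / (6480 * x ^ 3)|
        + |logStirlingRatio x - (1 / (144 * x ^ 2) - 23 / (6480 * x ^ 3))| := by
        linarith [abs_sub_abs_le_abs_sub (logStirlingRatio x)
          (1 / (144 * x ^ 2) - 23 / (6480 * x ^ 3))]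
    _ ≤ 1 / (144 * x ^ 2) + 3 / x ^ 4 := add_le_add hP (abs_logStirlingRatio_sub_le hx)
    _ ≤ 1 / x ^ 2 := by
        rw [div_add_div _ _ (by positivity) (by positivity),
          div_le_div_iff₀ (by positivity) (by positivity)]
        have h16 : 16 ≤ x ^ 4 := by nlinarith [pow_le_pow_left₀ (by norm_num : (0:ℝ) ≤ 2) hx 4]
        nlinarith [mul_nonneg (pow_pos hx0 2).le (sub_nonneg.2 h16)]

theorem even_expansion_first_term :
    ∃ C > (0:ℝ), ∃ X : ℝ, ∀ x ≥ X,
      |Real.Gamma (x + 1) / (x ^ x * Real.exp (-x) * Real.sqrt (2 * π * (x + 1/6))) -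
          (1 + (1/144) / (x + 23/90) ^ 2)|
        ≤ C / x ^ 4 := by
  refine ⟨5, by norm_num, 2, fun x hx ↦ ?_⟩
  have hx0 : 0 < x := by linarith
  set E := logStirlingRatio x
  set P := 1 / (144 * x ^ 2) - 23 / (6480 * x ^ 3)
  have hE : |E| ≤ 1 / x ^ 2 := abs_logStirlingRatio_le hx
  have hexp : |exp E - 1 - E| ≤ 1 / x ^ 4 := by
    refine (abs_exp_sub_one_sub_id_le (hE.trans ?_)).trans ?_
    · rw [div_le_one (by positivity)]
      nlinarith
    · calc E ^ 2 = |E| ^ 2 := (sq_abs E).symm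
        _ ≤ (1 / x ^ 2) ^ 2 := by gcongr
        _ = 1 / x ^ 4 := by ring
  rw [← exp_logStirlingRatio hx0]
  calc |exp E - (1 + 1 / 144 / (x + 23/90) ^ 2)|
      = |(exp E - 1 - E) + (E - P) + (P - 1 / 144 / (x + 23/90) ^ 2)| := by congr 1; ring
    _ ≤ |exp E - 1 - E| + |E - P| + |P - 1 / 144 / (x + 23/90) ^ 2| :=
        (abs_add_le _ _).trans (add_le_add_left (abs_add_le _ _) _)
    _ ≤ 1 / x ^ 4 + 3 / x ^ 4 + 1 / x ^ 4 :=
        add_le_add (add_le_add hexp (abs_logStirlingRatio_sub_le hx)) (abs_sub_inv_sq_shift_le hx0)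
    _ = 5 / x ^ 4 := by ring
end
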